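/- arXiv:1007.3001 — 3 statements merged into one kernel-verified Lean document; each statement's English description precedes it below -/
import Mathlib

section
/- Let H be a complex Hilbert space, let A : [0, ∞) → B(H) assign to each t a bounded linear operator on H, let F : [0, ∞) × H → H, and let u : [0, ∞) → H be differentiable with u̇(t) = A(t) u(t) + F(t, u(t)) for all t ≥ 0. Assume: Re⟨A(t) w, w⟩ ≤ −γ(t) ‖w‖² for all w ∈ H and t ≥ 0; ‖F(t, w)‖ ≤ c₀ ‖w‖^{1+p} for all w ∈ H and t ≥ 0, where c₀ > 0 and p > 0; and γ(t) = b₁ (b₀ + t)^{−d} with b₀, b₁ > 0 and d ∈ (0, 1). Suppose μ₀ > 0 satisfies μ₀ ‖u(0)‖ < 1, 2 c₀ μ₀^{−p} ≤ b₁ b₀^{−d}, and 2d < p b₁ b₀^{1−d}. Then ‖u(t)‖ < μ₀^{−1} exp(−(b₁ / (2(1 − d))) [(b₀ + t)^{1−d} − b₀^{1−d}]) for all t ≥ 0; in particular, ‖u(t)‖ → 0 as t → ∞. -/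
open Filter Real Topology
open scoped InnerProductSpace

/-!
Let `Γ(t) = ∫₀ᵗ γ`. The energy `‖u‖² e^Γ` has derivative `e^Γ (2 Re⟨A u + F u, u⟩ + γ ‖u‖²)`,
which is `≤ 0` as long as `2 c₀ ‖u‖^p ≤ γ`. That smallness holds while
`‖u(t)‖ < μ₀⁻¹ e^{-Γ(t)/2}`: the condition `2d < p b₁ b₀^{1-d}` makes `(b₀ + t)^{-d} e^{pΓ(t)/2}`
nondecreasing, so `2 c₀ μ₀^{-p} e^{-pΓ/2} ≤ b₁ b₀^{-d} e^{-pΓ/2} ≤ γ`. Hence the energy can never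
reach `μ₀⁻²`, which it starts below.
-/

section InnerProduct

variable {𝕜 E : Type*} [RCLike 𝕜] [NormedAddCommGroup E] [InnerProductSpace 𝕜 E]

theorem two_mul_re_inner_add_le {v a f : E} {γ c p : ℝ} (hp : 0 ≤ p)
    (ha : RCLike.re ⟪a, v⟫_𝕜 ≤ -γ * ‖v‖ ^ 2) (hf : ‖f‖ ≤ c * ‖v‖ ^ (1 + p))
    (hγ : 2 * c * ‖v‖ ^ p ≤ γ) :
    2 * RCLike.re ⟪a + f, v⟫_𝕜 ≤ -γ * ‖v‖ ^ 2 := by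
  have hf' : RCLike.re ⟪f, v⟫_𝕜 ≤ c * ‖v‖ ^ p * ‖v‖ ^ 2 :=
    calc RCLike.re ⟪f, v⟫_𝕜 ≤ ‖f‖ * ‖v‖ := re_inner_le_norm f v
      _ ≤ c * ‖v‖ ^ (1 + p) * ‖v‖ := by gcongr
      _ = c * ‖v‖ ^ p * ‖v‖ ^ 2 := by
        rw [rpow_one_add' (norm_nonneg v) (by linarith)]; ring
  rw [inner_add_left, map_add]
  nlinarith [mul_le_mul_of_nonneg_right hγ (sq_nonneg ‖v‖)]

end InnerProduct

theorem hasDerivAt_norm_sq_mul_exp {E : Type*} [NormedAddCommGroup E] [InnerProductSpace ℂ E]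
    {u : ℝ → E} {u' : E} {g : ℝ → ℝ} {g' t : ℝ} (hu : HasDerivAt u u' t) (hg : HasDerivAt g g' t) :
    HasDerivAt (fun s => ‖u s‖ ^ 2 * exp (g s))
      (exp (g t) * (2 * (inner ℂ u' (u t)).re + g' * ‖u t‖ ^ 2)) t := by
  let : InnerProductSpace ℝ E := InnerProductSpace.complexToReal
  have hnorm : HasDerivAt (‖u ·‖ ^ 2) (2 * (inner ℂ u' (u t)).re) t := by
    simpa only [real_inner_eq_re_inner ℂ, inner_re_symm, RCLike.re_to_complex] using hu.norm_sq
  exact (hnorm.mul hg.exp).congr_deriv (by ring)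

theorem image_lt_of_deriv_nonpos_of_lt {f f' : ℝ → ℝ} {a K : ℝ}
    (hf : ∀ x ≥ a, HasDerivAt f (f' x) x) (ha : f a < K)
    (hf' : ∀ x ≥ a, f x < K → f' x ≤ 0) :
    ∀ x ≥ a, f x < K := by
  intro x hx
  -- a line of positive slope through `f a` staying below `K` on `[a, x]` serves as the barrier
  set ε := (K - f a) / (x - a + 1)
  have hε : 0 < ε := div_pos (by linarith) (by linarith)
  have hεx : f a + ε * (x - a) < K := by
    have : ε * (x - a + 1) = K - f a := div_mul_cancel₀ _ (by linarith)
    nlinarith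
  have hB : ∀ y, HasDerivAt (fun y => f a + ε * (y - a)) ε y := fun y => by
    simpa using ((hasDerivAt_id y).sub_const a).const_mul ε |>.const_add (f a)
  have hle := image_le_of_deriv_right_lt_deriv_boundary (a := a) (b := x)
    (fun y hy => (hf y hy.1).continuousAt.continuousWithinAt)
    (fun y hy => (hf y hy.1).hasDerivWithinAt) (by simp) hB
    (fun y hy hfy => (hf' y hy.1 (by rw [hfy]; nlinarith [hy.2.le])).trans_lt hε)
  exact (hle ⟨hx, le_rfl⟩).trans_lt hεx

/-- `∫₀ᵗ γ` for `γ(s) = b₁ (b₀ + s)^{-d}`, `d ≠ 1`. -/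
noncomputable def gammaIntegral (b₀ b₁ d t : ℝ) : ℝ :=
  b₁ / (1 - d) * ((b₀ + t) ^ (1 - d) - b₀ ^ (1 - d))

section GammaIntegral

variable {b₀ b₁ d p t : ℝ}

@[simp]
theorem gammaIntegral_zero : gammaIntegral b₀ b₁ d 0 = 0 := by
  simp [gammaIntegral]

theorem hasDerivAt_gammaIntegral (hd : d ≠ 1) (ht : 0 < b₀ + t) :
    HasDerivAt (gammaIntegral b₀ b₁ d) (b₁ * (b₀ + t) ^ (-d)) t := by
  have hbase : HasDerivAt (fun s : ℝ => b₀ + s) 1 t := (hasDerivAt_id t).const_add b₀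
  have hpow := ((hasDerivAt_rpow_const (p := 1 - d) (Or.inl ht.ne')).comp t hbase).sub_const
    (b₀ ^ (1 - d)) |>.const_mul (b₁ / (1 - d))
  refine hpow.congr_deriv ?_
  rw [show 1 - d - 1 = -d by ring]
  field_simp [sub_ne_zero.2 hd.symm]

theorem tendsto_gammaIntegral_atTop (hb₁ : 0 < b₁) (hd : d < 1) :
    Tendsto (gammaIntegral b₀ b₁ d) atTop atTop := by
  have hpow : Tendsto (fun t : ℝ => (b₀ + t) ^ (1 - d)) atTop atTop :=
    (tendsto_rpow_atTop (by linarith)).comp (tendsto_atTop_add_const_left _ b₀ tendsto_id)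
  exact (tendsto_atTop_add_const_right _ _ hpow).const_mul_atTop (div_pos hb₁ (by linarith))

theorem two_mul_mul_log_le_mul_gammaIntegral (hb₀ : 0 < b₀) (hb₁ : 0 ≤ b₁) (hp : 0 ≤ p)
    (hd : d < 1) (hpar : 2 * d ≤ p * b₁ * b₀ ^ (1 - d)) (ht : 0 ≤ t) :
    2 * d * (log (b₀ + t) - log b₀) ≤ p * gammaIntegral b₀ b₁ d t := by
  have hlog : ∀ s ≥ 0, HasDerivAt (fun s => 2 * d * (log (b₀ + s) - log b₀))
      (2 * d * (b₀ + s)⁻¹) s := fun s hs => by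
    simpa using (((hasDerivAt_id' s).const_add b₀).log (by linarith)).sub_const (log b₀)
      |>.const_mul (2 * d)
  have hΓ : ∀ s ≥ 0, HasDerivAt (fun s => p * gammaIntegral b₀ b₁ d s)
      (p * (b₁ * (b₀ + s) ^ (-d))) s := fun s hs =>
    (hasDerivAt_gammaIntegral hd.ne (by linarith)).const_mul p
  -- the derivatives compare as `2d ≤ p b₁ (b₀ + s)^{1-d}`, which is the hypothesis at `s = 0`
  have hderiv : ∀ s ≥ 0, 2 * d * (b₀ + s)⁻¹ ≤ p * (b₁ * (b₀ + s) ^ (-d)) := fun s hs => by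
    have hs₀ : 0 < b₀ + s := by linarith
    have hmono : b₀ ^ (1 - d) ≤ (b₀ + s) ^ (1 - d) :=
      rpow_le_rpow hb₀.le (by linarith) (by linarith)
    rw [show -d = 1 - d - 1 by ring, rpow_sub_one hs₀.ne', ← div_eq_mul_inv,
      show p * (b₁ * ((b₀ + s) ^ (1 - d) / (b₀ + s))) = p * b₁ * (b₀ + s) ^ (1 - d) / (b₀ + s)
        by ring, div_eq_mul_inv]
    exact mul_le_mul_of_nonneg_right (hpar.trans (mul_le_mul_of_nonneg_left hmono
      (mul_nonneg hp hb₁))) (inv_nonneg.2 hs₀.le)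
  exact image_le_of_deriv_right_le_deriv_boundary (a := 0) (b := t)
    (fun s hs => (hlog s hs.1).continuousAt.continuousWithinAt)
    (fun s hs => (hlog s hs.1).hasDerivWithinAt) (by simp)
    (fun s hs => (hΓ s hs.1).continuousAt.continuousWithinAt)
    (fun s hs => (hΓ s hs.1).hasDerivWithinAt) (fun s hs => hderiv s hs.1) ⟨ht, le_rfl⟩

theorem rpow_neg_mul_exp_le (hb₀ : 0 < b₀) (hb₁ : 0 ≤ b₁) (hp : 0 ≤ p) (hd : d < 1)
    (hpar : 2 * d ≤ p * b₁ * b₀ ^ (1 - d)) (ht : 0 ≤ t) :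
    b₀ ^ (-d) * exp (-(p * gammaIntegral b₀ b₁ d t / 2)) ≤ (b₀ + t) ^ (-d) := by
  rw [rpow_def_of_pos hb₀, rpow_def_of_pos (by linarith), ← exp_add, exp_le_exp]
  linarith [two_mul_mul_log_le_mul_gammaIntegral hb₀ hb₁ hp hd hpar ht]

theorem two_mul_rpow_le_of_le_inv_mul_exp {c₀ μ₀ x : ℝ} (hb₀ : 0 < b₀) (hb₁ : 0 ≤ b₁)
    (hp : 0 ≤ p) (hd : d < 1) (hc₀ : 0 ≤ c₀) (hμ₀ : 0 < μ₀)
    (hpar₁ : 2 * c₀ * μ₀ ^ (-p) ≤ b₁ * b₀ ^ (-d)) (hpar₂ : 2 * d ≤ p * b₁ * b₀ ^ (1 - d))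
    (ht : 0 ≤ t) (hx : 0 ≤ x) (hxt : x ≤ μ₀⁻¹ * exp (-(gammaIntegral b₀ b₁ d t / 2))) :
    2 * c₀ * x ^ p ≤ b₁ * (b₀ + t) ^ (-d) :=
  calc 2 * c₀ * x ^ p ≤ 2 * c₀ * (μ₀⁻¹ * exp (-(gammaIntegral b₀ b₁ d t / 2))) ^ p := by
        gcongr
    _ = 2 * c₀ * μ₀ ^ (-p) * exp (-(p * gammaIntegral b₀ b₁ d t / 2)) := by
        rw [mul_rpow (by positivity) (exp_pos _).le, inv_rpow hμ₀.le, ← rpow_neg hμ₀.le,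
          ← exp_mul]
        ring_nf
    _ ≤ b₁ * b₀ ^ (-d) * exp (-(p * gammaIntegral b₀ b₁ d t / 2)) := by gcongr
    _ ≤ b₁ * (b₀ + t) ^ (-d) := by
        rw [mul_assoc]
        gcongr
        exact rpow_neg_mul_exp_le hb₀ hb₁ hp hd hpar₂ ht

end GammaIntegral

theorem lt_inv_mul_exp_neg_half_iff {x μ g : ℝ} (hx : 0 ≤ x) (hμ : 0 < μ) :
    x < μ⁻¹ * exp (-(g / 2)) ↔ x ^ 2 * exp g < μ⁻¹ ^ 2 := by
  have hsq : exp g = exp (g / 2) ^ 2 := by rw [sq, ← exp_add, add_halves]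
  rw [hsq, ← mul_pow, pow_lt_pow_iff_left₀ (by positivity) (by positivity) two_ne_zero, exp_neg,
    lt_mul_inv_iff₀ (exp_pos _)]

theorem asymptotic_stability_power_decay_general
    {H : Type*} [NormedAddCommGroup H] [InnerProductSpace ℂ H]
    (A : ℝ → H →L[ℂ] H) (F : ℝ → H → H) (u : ℝ → H)
    (b₀ b₁ d c₀ p μ₀ : ℝ)
    (hb₀ : 0 < b₀) (hb₁ : 0 < b₁) (hd₁ : d < 1)
    (hc₀ : 0 < c₀) (hp : 0 < p) (hμ₀ : 0 < μ₀)
    -- `u` is a strong solution of `u̇ = A(t)u + F(t, u)`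
    (hu : ∀ t ≥ (0:ℝ), HasDerivAt u (A t (u t) + F t (u t)) t)
    -- dissipativity: `Re⟨A(t)w, w⟩ ≤ −γ(t)‖w‖²` with `γ(t) = b₁(b₀+t)^{−d}`
    (hA : ∀ t ≥ (0:ℝ), ∀ w : H,
      (inner ℂ (A t w) w : ℂ).re ≤ -(b₁ * (b₀ + t) ^ (-d)) * ‖w‖ ^ 2)
    -- the nonlinearity estimate
    (hF : ∀ t ≥ (0:ℝ), ∀ w : H, ‖F t w‖ ≤ c₀ * ‖w‖ ^ (1 + p))
    -- smallness and parameter conditions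
    (hsmall : μ₀ * ‖u 0‖ < 1)
    (hpar₁ : 2 * c₀ * μ₀ ^ (-p) ≤ b₁ * b₀ ^ (-d))
    (hpar₂ : 2 * d < p * b₁ * b₀ ^ (1 - d)) :
    (∀ t ≥ (0:ℝ), ‖u t‖ < μ₀⁻¹ *
      Real.exp (-(b₁ / (2 * (1 - d))) * ((b₀ + t) ^ (1 - d) - b₀ ^ (1 - d)))) ∧
    Tendsto (fun t => ‖u t‖) atTop (nhds 0) := by
  set Γ := gammaIntegral b₀ b₁ d
  have hsmall_iff : ∀ t, ‖u t‖ < μ₀⁻¹ * exp (-(Γ t / 2)) ↔ ‖u t‖ ^ 2 * exp (Γ t) < μ₀⁻¹ ^ 2 :=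
    fun t => lt_inv_mul_exp_neg_half_iff (norm_nonneg _) hμ₀
  have henergy : ∀ t ≥ (0:ℝ), ‖u t‖ ^ 2 * exp (Γ t) < μ₀⁻¹ ^ 2 := by
    refine image_lt_of_deriv_nonpos_of_lt (fun t ht => hasDerivAt_norm_sq_mul_exp (hu t ht)
      (hasDerivAt_gammaIntegral hd₁.ne (by linarith))) ?_ fun t ht hlt => ?_
    · rw [← hsmall_iff, lt_inv_mul_iff₀ hμ₀]
      simpa [Γ] using hsmall
    · have hγ := two_mul_rpow_le_of_le_inv_mul_exp hb₀ hb₁.le hp.le hd₁ hc₀.le hμ₀ hpar₁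
        hpar₂.le ht (norm_nonneg _) ((hsmall_iff t).2 hlt).le
      have := two_mul_re_inner_add_le (𝕜 := ℂ) hp.le (hA t ht (u t)) (hF t ht (u t)) hγ
      rw [RCLike.re_to_complex] at this
      exact mul_nonpos_of_nonneg_of_nonpos (exp_pos _).le (by linarith)
  have hbound : ∀ t ≥ (0:ℝ), ‖u t‖ < μ₀⁻¹ * exp (-(Γ t / 2)) :=
    fun t ht => (hsmall_iff t).2 (henergy t ht)
  refine ⟨fun t ht => ?_, ?_⟩
  · convert hbound t ht using 3
    simp only [Γ, gammaIntegral]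
    field_simp [(by linarith : 1 - d ≠ 0)]
  · have hbarrier : Tendsto (fun t => μ₀⁻¹ * exp (-(Γ t / 2))) atTop (𝓝 0) := by
      simpa using (tendsto_exp_neg_atTop_nhds_zero.comp
        ((tendsto_gammaIntegral_atTop hb₁ hd₁).atTop_div_const two_pos)).const_mul μ₀⁻¹
    exact squeeze_zero' (Eventually.of_forall fun t => norm_nonneg _)
      ((eventually_ge_atTop 0).mono fun t ht => (hbound t ht).le) hbarrier

/-- Stability estimate for `u̇ = A(t)u + F(t,u)` with `γ(t) = b₁ (b₀ + t)^{−d}`, `d ∈ (0,1)`: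
if `Re⟨A(t)w, w⟩ ≤ −γ(t)‖w‖²`, `‖F(t,w)‖ ≤ c₀‖w‖^{1+p}`, and `μ₀ > 0` satisfies
`μ₀‖u(0)‖ < 1`, `2c₀μ₀^{−p} ≤ b₁ b₀^{−d}` and `2d < p b₁ b₀^{1−d}`, then
`‖u(t)‖ < μ₀⁻¹ exp(−(b₁/(2(1−d)))[(b₀+t)^{1−d} − b₀^{1−d}])` for all `t ≥ 0`;
in particular `‖u(t)‖ → 0` as `t → ∞`. -/
theorem asymptotic_stability_power_decay
    {H : Type*} [NormedAddCommGroup H] [InnerProductSpace ℂ H] [CompleteSpace H]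
    (A : ℝ → H →L[ℂ] H) (F : ℝ → H → H) (u : ℝ → H)
    (b₀ b₁ d c₀ p μ₀ : ℝ)
    (hb₀ : 0 < b₀) (hb₁ : 0 < b₁) (hd₀ : 0 < d) (hd₁ : d < 1)
    (hc₀ : 0 < c₀) (hp : 0 < p) (hμ₀ : 0 < μ₀)
    -- `u` is a strong solution of `u̇ = A(t)u + F(t, u)`
    (hu : ∀ t ≥ (0:ℝ), HasDerivAt u (A t (u t) + F t (u t)) t)
    -- dissipativity: `Re⟨A(t)w, w⟩ ≤ −γ(t)‖w‖²` with `γ(t) = b₁(b₀+t)^{−d}`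
    (hA : ∀ t ≥ (0:ℝ), ∀ w : H,
      (inner ℂ (A t w) w : ℂ).re ≤ -(b₁ * (b₀ + t) ^ (-d)) * ‖w‖ ^ 2)
    -- the nonlinearity estimate
    (hF : ∀ t ≥ (0:ℝ), ∀ w : H, ‖F t w‖ ≤ c₀ * ‖w‖ ^ (1 + p))
    -- smallness and parameter conditions
    (hsmall : μ₀ * ‖u 0‖ < 1)
    (hpar₁ : 2 * c₀ * μ₀ ^ (-p) ≤ b₁ * b₀ ^ (-d))
    (hpar₂ : 2 * d < p * b₁ * b₀ ^ (1 - d)) :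
    (∀ t ≥ (0:ℝ), ‖u t‖ < μ₀⁻¹ *
      Real.exp (-(b₁ / (2 * (1 - d))) * ((b₀ + t) ^ (1 - d) - b₀ ^ (1 - d)))) ∧
    Tendsto (fun t => ‖u t‖) atTop (nhds 0) :=
  asymptotic_stability_power_decay_general A F u b₀ b₁ d c₀ p μ₀ hb₀ hb₁ hd₁ hc₀ hp hμ₀ hu hA hF
    hsmall hpar₁ hpar₂
end

section
/- Let H be a complex Hilbert space, let A : [0, ∞) → B(H) assign to each t a bounded linear operator on H, let F : [0, ∞) × H → H, and let u : [0, ∞) → H be differentiable with u̇(t) = A(t) u(t) + F(t, u(t)) for all t ≥ 0. Assume: Re⟨A(t) w, w⟩ ≤ −γ(t) ‖w‖² for all w ∈ H and t ≥ 0; ‖F(t, w)‖ ≤ c₀ ‖w‖^{1+p} for all w ∈ H and t ≥ 0, where c₀ > 0 and p > 0; and γ(t) = b₁ (b₀ + t)^{−1} with b₀, b₁ > 0. Suppose b₁ p > 2 and μ₀ > 0 satisfies μ₀ ‖u(0)‖ < 1 and 2 c₀ μ₀^{−p} ≤ b₁ / b₀. Then ‖u(t)‖ < μ₀^{−1} (b₀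 / (b₀ + t))^{b₁ / 2} for all t ≥ 0; in particular, ‖u(t)‖ → 0 as t → ∞. -/
/-!
Compare the energy `‖u t‖²` with the barrier `c · M(t)²`, where `M = decayBound μ₀ b₀ b₁` is the
claimed bound and `(μ₀‖u 0‖)² < c < 1`. The barrier solves `y' = -γ y`, while the energy satisfies
`d/dt ‖u‖² = 2 Re⟪Au + F(u), u⟫ ≤ 2 (c₀‖u‖^p - γ) ‖u‖²`. Below the bound `M`, the parameter
conditions give `2 c₀ ‖u‖^p < γ`: the power `(b₀/(b₀+t))^{b₁p/2}` coming from `M^p` is at most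
`b₀/(b₀+t)` because `b₁p ≥ 2`. So at a first contact time the energy would decrease strictly
faster than the barrier; contact never happens, and `‖u t‖ ≤ √c · M(t) < M(t)`.
-/

open Filter
open scoped InnerProductSpace

theorem image_le_of_deriv_lt_deriv_boundary_Ici {f f' B B' : ℝ → ℝ} {a : ℝ}
    (hf : ∀ x ≥ a, HasDerivAt f (f' x) x) (hB : ∀ x ≥ a, HasDerivAt B (B' x) x)
    (ha : f a ≤ B a) (bound : ∀ x ≥ a, f x = B x → f' x < B' x) :
    ∀ t ≥ a, f t ≤ B t := by
  intro t ht
  exact image_le_of_deriv_right_lt_deriv_boundary'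
    (fun x hx => (hf x hx.1).continuousAt.continuousWithinAt)
    (fun x hx => (hf x hx.1).hasDerivWithinAt) ha
    (fun x hx => (hB x hx.1).continuousAt.continuousWithinAt)
    (fun x hx => (hB x hx.1).hasDerivWithinAt) (fun x hx => bound x hx.1)
    (Set.right_mem_Icc.2 ht)

theorem lt_of_sq_le_mul_sq {n M c : ℝ} (hM : 0 < M) (hc : c < 1) (h : n ^ 2 ≤ c * M ^ 2) :
    n < M :=
  lt_of_pow_lt_pow_left₀ 2 hM.le (h.trans_lt (mul_lt_of_lt_one_left (by positivity) hc))

theorem hasDerivAt_div_add_rpow {a t : ℝ} (r : ℝ) (ha : a ≠ 0) (ht : a + t ≠ 0) :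
    HasDerivAt (fun s => (a / (a + s)) ^ r) (-(r * (a + t)⁻¹) * (a / (a + t)) ^ r) t := by
  have hρ : HasDerivAt (fun s => a / (a + s)) (-a / (a + t) ^ 2) t := by
    refine ((hasDerivAt_const t a).fun_div ((hasDerivAt_id t).const_add a) ht).congr_deriv ?_
    simp
  convert hρ.rpow_const (p := r) (Or.inl (div_ne_zero ha ht)) using 1
  rw [Real.rpow_sub_one (div_ne_zero ha ht)]
  field_simp

theorem tendsto_div_add_rpow_atTop (a : ℝ) {r : ℝ} (hr : 0 < r) :
    Tendsto (fun t => (a / (a + t)) ^ r) atTop (nhds 0) := by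
  have hρ : Tendsto (fun t => a / (a + t)) atTop (nhds 0) :=
    tendsto_const_nhds.div_atTop (tendsto_atTop_add_const_left _ _ tendsto_id)
  simpa [Real.zero_rpow hr.ne'] using hρ.rpow_const (Or.inr hr.le)

noncomputable def decayBound (μ₀ b₀ b₁ t : ℝ) : ℝ := μ₀⁻¹ * (b₀ / (b₀ + t)) ^ (b₁ / 2)

section DecayBound

variable {μ₀ b₀ b₁ t : ℝ}

theorem decayBound_pos (hμ₀ : 0 < μ₀) (hb₀ : 0 < b₀) (ht : 0 ≤ t) :
    0 < decayBound μ₀ b₀ b₁ t := by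
  unfold decayBound; positivity

theorem decayBound_zero (hb₀ : b₀ ≠ 0) : decayBound μ₀ b₀ b₁ 0 = μ₀⁻¹ := by
  simp [decayBound, hb₀]

theorem hasDerivAt_decayBound (hb₀ : b₀ ≠ 0) (ht : b₀ + t ≠ 0) :
    HasDerivAt (decayBound μ₀ b₀ b₁) (-(b₁ / 2 * (b₀ + t)⁻¹) * decayBound μ₀ b₀ b₁ t) t := by
  refine ((hasDerivAt_div_add_rpow (b₁ / 2) hb₀ ht).const_mul μ₀⁻¹).congr_deriv ?_
  unfold decayBound; ring

theorem tendsto_decayBound_atTop (μ₀ b₀ : ℝ) {b₁ : ℝ} (hb₁ : 0 < b₁) :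
    Tendsto (decayBound μ₀ b₀ b₁) atTop (nhds 0) := by
  have := (tendsto_div_add_rpow_atTop b₀ (half_pos hb₁)).const_mul μ₀⁻¹
  rwa [mul_zero] at this

theorem two_mul_rpow_lt_of_lt_decayBound {c₀ p n : ℝ} (hb₀ : 0 < b₀) (hc₀ : 0 < c₀) (hp : 0 < p)
    (hμ₀ : 0 < μ₀) (hbp : 2 ≤ b₁ * p) (hpar : 2 * c₀ * μ₀ ^ (-p) ≤ b₁ / b₀) (ht : 0 ≤ t)
    (hn : 0 ≤ n) (hnM : n < decayBound μ₀ b₀ b₁ t) :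
    2 * c₀ * n ^ p < b₁ * (b₀ + t)⁻¹ := by
  set ρ := b₀ / (b₀ + t)
  have hρ₀ : 0 < ρ := by positivity
  have hρ₁ : ρ ≤ 1 := div_le_one_of_le₀ (by linarith) (by positivity)
  have hnp : n ^ p < μ₀ ^ (-p) * ρ :=
    calc n ^ p < decayBound μ₀ b₀ b₁ t ^ p := Real.rpow_lt_rpow hn hnM hp
      _ = μ₀ ^ (-p) * ρ ^ (b₁ * p / 2) := by
        rw [decayBound, Real.mul_rpow (by positivity) (by positivity), Real.inv_rpow hμ₀.le,
          ← Real.rpow_neg hμ₀.le, ← Real.rpow_mul hρ₀.le]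
        ring_nf
      _ ≤ μ₀ ^ (-p) * ρ := by
        gcongr; exact Real.rpow_le_self_of_le_one hρ₀.le hρ₁ (by linarith)
  calc 2 * c₀ * n ^ p < 2 * c₀ * (μ₀ ^ (-p) * ρ) := by gcongr
    _ ≤ b₁ / b₀ * ρ := by rw [← mul_assoc]; gcongr
    _ = b₁ * (b₀ + t)⁻¹ := by simp only [ρ]; field_simp

end DecayBound

section ComplexHilbert

variable {H : Type*} [NormedAddCommGroup H] [InnerProductSpace ℂ H]

theorem HasDerivAt.norm_sq_of_complex {u : ℝ → H} {v : H} {t : ℝ} (hu : HasDerivAt u v t) :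
    HasDerivAt (‖u ·‖ ^ 2) (2 * (⟪v, u t⟫_ℂ).re) t := by
  let _ : InnerProductSpace ℝ H := InnerProductSpace.complexToReal
  rw [← inner_conj_symm, Complex.conj_re]
  exact hu.norm_sq

theorem re_inner_add_le {a f w : H} {γ c₀ p : ℝ} (hp : 0 ≤ p)
    (ha : (⟪a, w⟫_ℂ).re ≤ -γ * ‖w‖ ^ 2) (hf : ‖f‖ ≤ c₀ * ‖w‖ ^ (1 + p)) :
    (⟪a + f, w⟫_ℂ).re ≤ (c₀ * ‖w‖ ^ p - γ) * ‖w‖ ^ 2 := by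
  have hfw : (⟪f, w⟫_ℂ).re ≤ c₀ * ‖w‖ ^ p * ‖w‖ ^ 2 :=
    calc (⟪f, w⟫_ℂ).re ≤ ‖f‖ * ‖w‖ := (Complex.re_le_norm _).trans (norm_inner_le_norm f w)
      _ ≤ c₀ * ‖w‖ ^ (1 + p) * ‖w‖ := by gcongr
      _ = c₀ * ‖w‖ ^ p * ‖w‖ ^ 2 := by
        rw [Real.rpow_one_add' (norm_nonneg w) (by positivity)]; ring
  rw [inner_add_left, Complex.add_re]
  linarith

theorem two_re_inner_lt_of_norm_lt_decayBound {a f w : H} {μ₀ b₀ b₁ c₀ p t : ℝ}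
    (hb₀ : 0 < b₀) (hc₀ : 0 < c₀) (hp : 0 < p) (hμ₀ : 0 < μ₀) (hbp : 2 ≤ b₁ * p)
    (hpar : 2 * c₀ * μ₀ ^ (-p) ≤ b₁ / b₀) (ht : 0 ≤ t) (hw : 0 < ‖w‖)
    (hwM : ‖w‖ < decayBound μ₀ b₀ b₁ t)
    (ha : (⟪a, w⟫_ℂ).re ≤ -(b₁ * (b₀ + t)⁻¹) * ‖w‖ ^ 2) (hf : ‖f‖ ≤ c₀ * ‖w‖ ^ (1 + p)) :
    2 * (⟪a + f, w⟫_ℂ).re < -(b₁ * (b₀ + t)⁻¹) * ‖w‖ ^ 2 := by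
  have henergy := re_inner_add_le hp.le ha hf
  have hrate := two_mul_rpow_lt_of_lt_decayBound hb₀ hc₀ hp hμ₀ hbp hpar ht hw.le hwM
  have := mul_lt_mul_of_pos_right hrate (pow_pos hw 2)
  linarith

end ComplexHilbert

theorem asymptotic_stability_critical_decay_general
    {H : Type*} [NormedAddCommGroup H] [InnerProductSpace ℂ H]
    (A : ℝ → H →L[ℂ] H) (F : ℝ → H → H) (u : ℝ → H)
    (b₀ b₁ c₀ p μ₀ : ℝ)
    (hb₀ : 0 < b₀) (hb₁ : 0 < b₁) (hc₀ : 0 < c₀) (hp : 0 < p) (hμ₀ : 0 < μ₀)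
    -- `u` is a strong solution of `u̇ = A(t)u + F(t, u)`
    (hu : ∀ t ≥ (0:ℝ), HasDerivAt u (A t (u t) + F t (u t)) t)
    -- dissipativity: `Re⟨A(t)w, w⟩ ≤ −γ(t)‖w‖²` with `γ(t) = b₁(b₀+t)⁻¹`
    (hA : ∀ t ≥ (0:ℝ), ∀ w : H,
      (inner ℂ (A t w) w : ℂ).re ≤ -(b₁ * (b₀ + t)⁻¹) * ‖w‖ ^ 2)
    -- the nonlinearity estimate
    (hF : ∀ t ≥ (0:ℝ), ∀ w : H, ‖F t w‖ ≤ c₀ * ‖w‖ ^ (1 + p))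
    -- smallness and parameter conditions
    (hbp : 2 < b₁ * p)
    (hsmall : μ₀ * ‖u 0‖ < 1)
    (hpar : 2 * c₀ * μ₀ ^ (-p) ≤ b₁ / b₀) :
    (∀ t ≥ (0:ℝ), ‖u t‖ < μ₀⁻¹ * (b₀ / (b₀ + t)) ^ (b₁ / 2)) ∧
    Tendsto (fun t => ‖u t‖) atTop (nhds 0) := by
  obtain ⟨c, hc_init, hc_one⟩ :=
    exists_between (pow_lt_one₀ (by positivity) hsmall two_ne_zero)
  have hc : 0 < c := (sq_nonneg _).trans_lt hc_init
  have hM : ∀ t ≥ (0:ℝ), 0 < decayBound μ₀ b₀ b₁ t := fun t ht => decayBound_pos hμ₀ hb₀ ht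
  have hinit : ‖u 0‖ ^ 2 ≤ c * decayBound μ₀ b₀ b₁ 0 ^ 2 := by
    rw [decayBound_zero hb₀.ne', inv_pow, ← div_eq_mul_inv, le_div_iff₀ (by positivity)]
    linarith [mul_pow μ₀ ‖u 0‖ 2]
  have hbarrier : ∀ t ≥ (0:ℝ), ‖u t‖ ^ 2 ≤ c * decayBound μ₀ b₀ b₁ t ^ 2 := by
    refine image_le_of_deriv_lt_deriv_boundary_Ici (fun t ht => (hu t ht).norm_sq_of_complex)
      (fun t ht => ((hasDerivAt_decayBound hb₀.ne' (by positivity)).pow 2).const_mul c)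
      hinit fun t ht hcontact => ?_
    have hpos : 0 < ‖u t‖ := (norm_nonneg _).lt_of_ne' <| sq_pos_iff.1 <| by
      rw [hcontact]; exact mul_pos hc (pow_pos (hM t ht) 2)
    calc 2 * (⟪A t (u t) + F t (u t), u t⟫_ℂ).re < -(b₁ * (b₀ + t)⁻¹) * ‖u t‖ ^ 2 :=
          two_re_inner_lt_of_norm_lt_decayBound hb₀ hc₀ hp hμ₀ hbp.le hpar ht hpos
            (lt_of_sq_le_mul_sq (hM t ht) hc_one hcontact.le) (hA t ht _) (hF t ht _)
      _ = _ := by rw [hcontact]; push_cast; ring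
  have hbound : ∀ t ≥ (0:ℝ), ‖u t‖ < decayBound μ₀ b₀ b₁ t := fun t ht =>
    lt_of_sq_le_mul_sq (hM t ht) hc_one (hbarrier t ht)
  refine ⟨hbound, squeeze_zero' (Eventually.of_forall fun t => norm_nonneg _) ?_
    (tendsto_decayBound_atTop μ₀ b₀ hb₁)⟩
  filter_upwards [eventually_ge_atTop 0] with t ht using (hbound t ht).le

/-- Stability estimate for `u̇ = A(t)u + F(t,u)` with `γ(t) = b₁ (b₀ + t)⁻¹` (the case
`d = 1`): if `Re⟨A(t)w, w⟩ ≤ −γ(t)‖w‖²`, `‖F(t,w)‖ ≤ c₀‖w‖^{1+p}`, `b₁ p > 2`, and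
`μ₀ > 0` satisfies `μ₀‖u(0)‖ < 1` and `2c₀μ₀^{−p} ≤ b₁/b₀`, then
`‖u(t)‖ < μ₀⁻¹ (b₀/(b₀+t))^{b₁/2}` for all `t ≥ 0`;
in particular `‖u(t)‖ → 0` as `t → ∞`. -/
theorem asymptotic_stability_critical_decay
    {H : Type*} [NormedAddCommGroup H] [InnerProductSpace ℂ H] [CompleteSpace H]
    (A : ℝ → H →L[ℂ] H) (F : ℝ → H → H) (u : ℝ → H)
    (b₀ b₁ c₀ p μ₀ : ℝ)
    (hb₀ : 0 < b₀) (hb₁ : 0 < b₁) (hc₀ : 0 < c₀) (hp : 0 < p) (hμ₀ : 0 < μ₀)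
    -- `u` is a strong solution of `u̇ = A(t)u + F(t, u)`
    (hu : ∀ t ≥ (0:ℝ), HasDerivAt u (A t (u t) + F t (u t)) t)
    -- dissipativity: `Re⟨A(t)w, w⟩ ≤ −γ(t)‖w‖²` with `γ(t) = b₁(b₀+t)⁻¹`
    (hA : ∀ t ≥ (0:ℝ), ∀ w : H,
      (inner ℂ (A t w) w : ℂ).re ≤ -(b₁ * (b₀ + t)⁻¹) * ‖w‖ ^ 2)
    -- the nonlinearity estimate
    (hF : ∀ t ≥ (0:ℝ), ∀ w : H, ‖F t w‖ ≤ c₀ * ‖w‖ ^ (1 + p))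
    -- smallness and parameter conditions
    (hbp : 2 < b₁ * p)
    (hsmall : μ₀ * ‖u 0‖ < 1)
    (hpar : 2 * c₀ * μ₀ ^ (-p) ≤ b₁ / b₀) :
    (∀ t ≥ (0:ℝ), ‖u t‖ < μ₀⁻¹ * (b₀ / (b₀ + t)) ^ (b₁ / 2)) ∧
    Tendsto (fun t => ‖u t‖) atTop (nhds 0) :=
  asymptotic_stability_critical_decay_general A F u b₀ b₁ c₀ p μ₀ hb₀ hb₁ hc₀ hp hμ₀ hu hA hF hbp
    hsmall hpar
end

section
/- Let H be a complex Hilbert space, let A be a bounded linear operator on H with Re⟨A w, w⟩ ≤ 0 for all w ∈ H, and let B : [0, ∞) → B(H) be continuous with ∫₀^∞ ‖B(t)‖ dt < ∞. Let v : [0, ∞) → H be differentiable with v̇(t) = A v(t) + B(t) v(t) for all t ≥ 0. Then the limit lim_{t → ∞} ‖v(t)‖ exists and is finite. -/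
/-!
Since `Re⟨A w, w⟩ ≤ 0`, the energy `‖v t‖ ^ 2` satisfies
`d/dt ‖v‖² = 2 Re⟨A v + B v, v⟩ ≤ 2 ‖B t‖ ‖v‖²`. With the integrating factor `exp (-2 ∫₀ᵗ ‖B‖)`
it becomes nonincreasing and stays nonnegative, hence converges; as `∫₀ᵗ ‖B‖` converges too, so
does `‖v t‖ ^ 2`.
-/

open MeasureTheory Filter Set Topology RCLike
open scoped InnerProductSpace

section InnerProduct

variable {𝕜 E : Type*} [RCLike 𝕜] [NormedAddCommGroup E] [InnerProductSpace 𝕜 E]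

theorem re_inner_add_apply_self_le {A : E →L[𝕜] E} (hA : ∀ w, re ⟪A w, w⟫_𝕜 ≤ 0)
    (T : E →L[𝕜] E) (w : E) : re ⟪A w + T w, w⟫_𝕜 ≤ ‖T‖ * ‖w‖ ^ 2 :=
  calc re ⟪A w + T w, w⟫_𝕜 = re ⟪A w, w⟫_𝕜 + re ⟪T w, w⟫_𝕜 := by
        rw [inner_add_left, map_add]
    _ ≤ 0 + ‖T w‖ * ‖w‖ := add_le_add (hA w) (re_inner_le_norm _ _)
    _ ≤ ‖T‖ * ‖w‖ ^ 2 := by nlinarith [T.le_opNorm w, norm_nonneg w]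

theorem HasDerivAt.norm_sq_re_inner [NormedSpace ℝ E] {f : ℝ → E} {f' : E} {x : ℝ}
    (hf : HasDerivAt f f' x) :
    HasDerivAt (‖f ·‖ ^ 2) (2 * re ⟪f', f x⟫_𝕜) x := by
  have h := reCLM.hasFDerivAt.comp_hasDerivAt x (hf.inner 𝕜 hf)
  simp only [Function.comp_def, reCLM_apply, inner_self_eq_norm_sq, map_add] at h
  exact h.congr_deriv (by rw [inner_re_symm (𝕜 := 𝕜) (f x) f']; ring)

end InnerProduct

theorem ContinuousOn.exists_hasDerivAt_tendsto {b : ℝ → ℝ} {a : ℝ}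
    (hb : ContinuousOn b (Ici a)) (hb_int : IntegrableOn b (Ici a)) :
    ∃ I : ℝ → ℝ, (∀ t ≥ a, HasDerivAt I (b t) t) ∧ ∃ C, Tendsto I atTop (𝓝 C) := by
  set b' : ℝ → ℝ := fun t => b (max t a)
  have hb' : Continuous b' :=
    hb.comp_continuous (continuous_id.max continuous_const) fun t => le_max_right t a
  have hb'_eq : EqOn b' b (Ici a) := fun t ht => by
    simp only [b', max_eq_left (mem_Ici.mp ht)]
  refine ⟨fun t => ∫ s in a..t, b' s, fun t ht => ?_, _,
    intervalIntegral_tendsto_integral_Ioi a ?_ tendsto_id⟩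
  · simpa only [hb'_eq (mem_Ici.mpr ht)] using (hb'.integral_hasStrictDerivAt a t).hasDerivAt
  · exact (hb_int.congr_fun hb'_eq.symm measurableSet_Ici).mono_set Ioi_subset_Ici_self

theorem AntitoneOn.exists_tendsto_atTop {g : ℝ → ℝ} {a c : ℝ} (hg : AntitoneOn g (Ici a))
    (hc : ∀ t ≥ a, c ≤ g t) : ∃ L, Tendsto g atTop (𝓝 L) := by
  set G : ℝ → ℝ := fun t => g (max t a)
  have hG : Antitone G := fun s t hst =>
    hg (le_max_right s a) (le_max_right t a) (max_le_max hst le_rfl)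
  refine ⟨_, (tendsto_atTop_ciInf hG ⟨c, ?_⟩).congr' ?_⟩
  · rintro _ ⟨t, rfl⟩
    exact hc _ (le_max_right t a)
  · filter_upwards [eventually_ge_atTop a] with t ht
    simp only [G, max_eq_left ht]

section Gronwall

variable {f f' b I : ℝ → ℝ} {a : ℝ}

theorem antitoneOn_mul_exp_neg_of_hasDerivAt_le_mul (hf : ∀ t ≥ a, HasDerivAt f (f' t) t)
    (hI : ∀ t ≥ a, HasDerivAt I (b t) t) (hf' : ∀ t ≥ a, f' t ≤ b t * f t) :
    AntitoneOn (fun t => f t * Real.exp (-I t)) (Ici a) := by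
  have hderiv : ∀ t ≥ a, HasDerivAt (fun t => f t * Real.exp (-I t))
      ((f' t - b t * f t) * Real.exp (-I t)) t := fun t ht =>
    ((hf t ht).mul (hI t ht).neg.exp).congr_deriv (by rw [Pi.neg_apply]; ring)
  refine antitoneOn_of_hasDerivWithinAt_nonpos (convex_Ici a)
    (f' := fun t => (f' t - b t * f t) * Real.exp (-I t))
    (fun t ht => (hderiv t ht).continuousAt.continuousWithinAt) (fun t ht => ?_) (fun t ht => ?_)
  all_goals rw [interior_Ici] at ht
  · exact (hderiv t ht.le).hasDerivWithinAt
  · exact mul_nonpos_of_nonpos_of_nonneg (sub_nonpos.mpr (hf' t ht.le)) (Real.exp_pos _).le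

theorem exists_tendsto_of_hasDerivAt_le_mul (hb : ContinuousOn b (Ici a))
    (hb_int : IntegrableOn b (Ici a)) (hf : ∀ t ≥ a, HasDerivAt f (f' t) t)
    (hf' : ∀ t ≥ a, f' t ≤ b t * f t) (hf₀ : ∀ t ≥ a, 0 ≤ f t) :
    ∃ L, Tendsto f atTop (𝓝 L) := by
  obtain ⟨I, hI, C, hIC⟩ := hb.exists_hasDerivAt_tendsto hb_int
  obtain ⟨L, hL⟩ := (antitoneOn_mul_exp_neg_of_hasDerivAt_le_mul hf hI hf').exists_tendsto_atTop
    fun t ht => mul_nonneg (hf₀ t ht) (Real.exp_pos _).le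
  refine ⟨L * Real.exp C, (hL.mul (Real.continuous_exp.continuousAt.tendsto.comp hIC)).congr ?_⟩
  intro t
  simp only [Function.comp_apply, mul_assoc, ← Real.exp_add, neg_add_cancel, Real.exp_zero,
    mul_one]

end Gronwall

theorem perturbed_linear_norm_limit_exists_general
    {H : Type*} [NormedAddCommGroup H] [InnerProductSpace ℂ H]
    (A : H →L[ℂ] H) (B : ℝ → H →L[ℂ] H) (v : ℝ → H)
    -- dissipativity of `A`
    (hA : ∀ w : H, (inner ℂ (A w) w : ℂ).re ≤ 0)
    -- `B` is continuous with integrable operator norm on `[0, ∞)`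
    (hB_cont : ContinuousOn B (Set.Ici 0))
    (hB_int : IntegrableOn (fun t => ‖B t‖) (Set.Ici 0))
    -- `v` is a strong solution of `v̇ = Av + B(t)v`
    (hv : ∀ t ≥ (0:ℝ), HasDerivAt v (A (v t) + B t (v t)) t) :
    ∃ V : ℝ, Tendsto (fun t => ‖v t‖) atTop (nhds V) := by
  obtain ⟨L, hL⟩ := exists_tendsto_of_hasDerivAt_le_mul (b := fun t => 2 * ‖B t‖)
    (continuousOn_const.mul hB_cont.norm) (hB_int.const_mul 2)
    (fun t ht => (hv t ht).norm_sq_re_inner)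
    (fun t _ => by linarith [re_inner_add_apply_self_le hA (B t) (v t)])
    (fun t _ => sq_nonneg ‖v t‖)
  refine ⟨√L, ((Real.continuous_sqrt.tendsto L).comp hL).congr fun t => ?_⟩
  exact Real.sqrt_sq (norm_nonneg _)

/-- If `A` is a bounded operator on a complex Hilbert space with `Re⟨Aw, w⟩ ≤ 0`,
`B(t)` is continuous with `∫₀^∞ ‖B(t)‖ dt < ∞`, and `v` solves `v̇ = Av + B(t)v`,
then `lim_{t → ∞} ‖v(t)‖` exists and is finite. -/
theorem perturbed_linear_norm_limit_exists
    {H : Type*} [NormedAddCommGroup H] [InnerProductSpace ℂ H] [CompleteSpace H]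
    (A : H →L[ℂ] H) (B : ℝ → H →L[ℂ] H) (v : ℝ → H)
    -- dissipativity of `A`
    (hA : ∀ w : H, (inner ℂ (A w) w : ℂ).re ≤ 0)
    -- `B` is continuous with integrable operator norm on `[0, ∞)`
    (hB_cont : ContinuousOn B (Set.Ici 0))
    (hB_int : IntegrableOn (fun t => ‖B t‖) (Set.Ici 0))
    -- `v` is a strong solution of `v̇ = Av + B(t)v`
    (hv : ∀ t ≥ (0:ℝ), HasDerivAt v (A (v t) + B t (v t)) t) :
    ∃ V : ℝ, Tendsto (fun t => ‖v t‖) atTop (nhds V) :=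
  perturbed_linear_norm_limit_exists_general A B v hA hB_cont hB_int hv
end
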